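/- Suppose G has highway dimension k (Definition 1), and let SPC(r) be a minimal, locally s-sparse shortest path cover for scale r. Then for every vertex v there are at most 3sk hubs h ∈ SPC(r) with dist(h, B_{cr/2}(v)) ≤ cr/2. -/
import Mathlib


open SimpleGraph

universe u

variable {V : Type u}

/-- The length of a walk in a graph `G` with edge lengths `len`. -/
noncomputable def wlen {G : SimpleGraph V} (len : V → V → ℝ) {u v : V} (w : G.Walk u v) : ℝ :=
  (w.darts.map (fun e => len e.toProd.1 e.toProd.2)).sum

/-- A walk is a *shortest path* (w.r.t. the shortest-path metric `d`) if it is a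
path whose total length equals the distance between its endpoints. -/
def IsShortestPath {G : SimpleGraph V} (len d : V → V → ℝ) {u v : V}
    (w : G.Walk u v) : Prop :=
  w.IsPath ∧ wlen len w = d u v

/-- `d` is the shortest-path metric of the graph `G` with edge lengths `len`:
it is a lower bound on the length of every walk, and for every pair of vertices it
is attained by some path (a shortest path). -/
def IsShortestPathMetric (G : SimpleGraph V) (len d : V → V → ℝ) : Prop :=
  (∀ (u v : V) (w : G.Walk u v), d u v ≤ wlen len w) ∧
  (∀ u v : V, ∃ w : G.Walk u v, IsShortestPath len d w)

/-- The closed ball `B_r(v)` of radius `r` around `v` (w.r.t. `d`). -/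
def cball (d : V → V → ℝ) (v : V) (r : ℝ) : Set V := {u | d u v ≤ r}

/-- A *shortest path cover* for scale `r` (with parameter `c`): a set of hubs
hitting every shortest path of length in `(r, c*r/2]`. -/
def IsSPC (G : SimpleGraph V) (len d : V → V → ℝ) (c r : ℝ) (H : Set V) : Prop :=
  ∀ (u v : V) (w : G.Walk u v), IsShortestPath len d w →
    r < wlen len w → wlen len w ≤ c * r / 2 → ∃ h ∈ H, h ∈ w.support

/-- A minimal shortest path cover: no proper subset is a shortest path cover. -/
def IsMinimalSPC (G : SimpleGraph V) (len d : V → V → ℝ) (c r : ℝ) (H : Set V) : Prop :=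
  IsSPC G len d c r H ∧ ∀ H' : Set V, H' ⊂ H → ¬ IsSPC G len d c r H'

/-- `H` is locally `s`-sparse for scale `r`: every ball of radius `c*r/2` contains
at most `s` vertices of `H`. -/
def LocallySparse (d : V → V → ℝ) (c r : ℝ) (s : ℕ) (H : Set V) : Prop :=
  ∀ v : V, (H ∩ cball d v (c * r / 2)).ncard ≤ s

/-- Definition 1: the highway dimension of `G` is at most `k` if for every scale
`r > 0` and every ball of radius `c*r`, there are at most `k` vertices in the ball
hitting all shortest paths of length more than `r` that lie inside the ball. -/
def HighwayDimLE (G : SimpleGraph V) (len d : V → V → ℝ) (c : ℝ) (k : ℕ) : Prop :=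
  ∀ r : ℝ, 0 < r → ∀ v : V, ∃ H : Set V, H ⊆ cball d v (c * r) ∧ H.ncard ≤ k ∧
    ∀ (a b : V) (w : G.Walk a b), IsShortestPath len d w →
      (∀ x ∈ w.support, x ∈ cball d v (c * r)) → r < wlen len w →
      ∃ h ∈ H, h ∈ w.support

section Aux

variable {G : SimpleGraph V} {len d : V → V → ℝ}

lemma wlen_nonneg (hlen_pos : ∀ u v : V, G.Adj u v → 0 < len u v)
    {a b : V} (w : G.Walk a b) : 0 ≤ wlen len w := by
  apply List.sum_nonneg
  intro x hx
  simp only [List.mem_map] at hx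
  obtain ⟨e, -, rfl⟩ := hx
  exact (hlen_pos _ _ e.adj).le

lemma wlen_append {a b e : V} (p : G.Walk a b) (q : G.Walk b e) :
    wlen len (p.append q) = wlen len p + wlen len q := by
  simp [wlen, Walk.darts_append]

lemma wlen_reverse (hlen_symm : ∀ u v : V, len u v = len v u)
    {a b : V} (w : G.Walk a b) : wlen len w.reverse = wlen len w := by
  simp only [wlen, Walk.darts_reverse, List.map_reverse, List.sum_reverse, List.map_map]
  congr 1
  apply List.map_congr_left
  intro e _
  simp [Dart.symm, hlen_symm e.toProd.2 e.toProd.1]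

lemma d_nonneg (hmetric : IsShortestPathMetric G len d)
    (hlen_pos : ∀ u v : V, G.Adj u v → 0 < len u v) (a b : V) : 0 ≤ d a b := by
  obtain ⟨w, -, hw⟩ := hmetric.2 a b
  rw [← hw]
  exact wlen_nonneg hlen_pos w

lemma d_symm (hmetric : IsShortestPathMetric G len d)
    (hlen_symm : ∀ u v : V, len u v = len v u) (a b : V) : d a b = d b a := by
  have key : ∀ x y : V, d x y ≤ d y x := by
    intro x y
    obtain ⟨w, -, hw⟩ := hmetric.2 y x
    have := hmetric.1 x y w.reverse
    rwa [wlen_reverse hlen_symm, hw] at this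
  exact le_antisymm (key a b) (key b a)

lemma d_triangle (hmetric : IsShortestPathMetric G len d) (a b e : V) :
    d a e ≤ d a b + d b e := by
  obtain ⟨w₁, -, hw₁⟩ := hmetric.2 a b
  obtain ⟨w₂, -, hw₂⟩ := hmetric.2 b e
  have := hmetric.1 a e (w₁.append w₂)
  rwa [wlen_append, hw₁, hw₂] at this

/-- Key lemma: the distance between any two vertices on a walk is at most the
length of the walk. -/
lemma dist_support_le [DecidableEq V] (hmetric : IsShortestPathMetric G len d)
    (hlen_pos : ∀ u v : V, G.Adj u v → 0 < len u v)
    (hlen_symm : ∀ u v : V, len u v = len v u)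
    {a b : V} (w : G.Walk a b) {x y : V} (hx : x ∈ w.support) (hy : y ∈ w.support) :
    d x y ≤ wlen len w := by
  -- split w at x
  have hspec := Walk.take_spec w hx
  have hsplit : wlen len w = wlen len (w.takeUntil x hx) + wlen len (w.dropUntil x hx) := by
    conv_lhs => rw [← hspec]
    rw [wlen_append]
  have hy' : y ∈ (w.takeUntil x hx).support ∨ y ∈ (w.dropUntil x hx).support := by
    rw [← Walk.mem_support_append_iff, hspec]; exact hy
  rcases hy' with hy1 | hy2
  · -- y on the first part, a walk from a to x; split at y, use walk y → x
    set t := w.takeUntil x hx with ht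
    have hspec2 := Walk.take_spec t hy1
    have h1 : d y x ≤ wlen len (t.dropUntil y hy1) := hmetric.1 y x _
    have h2 : wlen len t = wlen len (t.takeUntil y hy1) + wlen len (t.dropUntil y hy1) := by
      conv_lhs => rw [← hspec2]
      rw [wlen_append]
    have h3 : 0 ≤ wlen len (t.takeUntil y hy1) := wlen_nonneg hlen_pos _
    have h4 : 0 ≤ wlen len (w.dropUntil x hx) := wlen_nonneg hlen_pos _
    rw [d_symm hmetric hlen_symm x y]
    linarith
  · -- y on the second part, a walk from x to b; split at y, use walk x → y
    set t := w.dropUntil x hx with ht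
    have hspec2 := Walk.take_spec t hy2
    have h1 : d x y ≤ wlen len (t.takeUntil y hy2) := hmetric.1 x y _
    have h2 : wlen len t = wlen len (t.takeUntil y hy2) + wlen len (t.dropUntil y hy2) := by
      conv_lhs => rw [← hspec2]
      rw [wlen_append]
    have h3 : 0 ≤ wlen len (t.dropUntil y hy2) := wlen_nonneg hlen_pos _
    have h4 : 0 ≤ wlen len (w.takeUntil x hx) := wlen_nonneg hlen_pos _
    linarith

/-- From minimality: each hub `h` lies on some shortest path of length in
`(r, c*r/2]` (its "witness"). -/
lemma witness_of_minimal {c r : ℝ} {H : Set V}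
    (hH : IsMinimalSPC G len d c r H) {h : V} (hh : h ∈ H) :
    ∃ (a b : V) (w : G.Walk a b), IsShortestPath len d w ∧
      r < wlen len w ∧ wlen len w ≤ c * r / 2 ∧ h ∈ w.support := by
  have hss : H \ {h} ⊂ H :=
    (Set.ssubset_iff_of_subset Set.diff_subset).2 ⟨h, hh, by simp⟩
  have hnot := hH.2 (H \ {h}) hss
  unfold IsSPC at hnot
  push_neg at hnot
  obtain ⟨a, b, w, hsp, hlr, hlR, hmiss⟩ := hnot
  obtain ⟨g, hgH, hgsupp⟩ := hH.1 a b w hsp hlr hlR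
  have hgh : g = h := by
    by_contra hne
    exact (hmiss g ⟨hgH, hne⟩) hgsupp
  exact ⟨a, b, w, hsp, hlr, hlR, hgh ▸ hgsupp⟩

end Aux

lemma ncard_biUnion_le_sum {α β : Type*} (s : Finset α) (f : α → Set β) :
    (⋃ x ∈ s, f x).ncard ≤ ∑ x ∈ s, (f x).ncard := by
  classical
  induction s using Finset.induction_on with
  | empty => simp
  | @insert a t hat ih =>
      rw [Finset.set_biUnion_insert, Finset.sum_insert hat]
      exact le_trans (Set.ncard_union_le _ _) (by omega)


/-- Lemma 14 of the paper: if `G` has highway dimension `k` and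
`SPC(r)` is a minimal, locally `s`-sparse shortest path cover for scale `r`, then
for every vertex `v` there are at most `3*s*k` hubs `h ∈ SPC(r)` with
`dist(h, B_{c*r/2}(v)) ≤ c*r/2`. -/
theorem statement7 {V : Type} [Fintype V] (G : SimpleGraph V) (len d : V → V → ℝ)
    (hlen_symm : ∀ u v : V, len u v = len v u)
    (hlen_pos : ∀ u v : V, G.Adj u v → 0 < len u v)
    (hmetric : IsShortestPathMetric G len d)
    (c : ℝ) (hc : 4 ≤ c) (r : ℝ) (hr : 0 < r)
    (k s : ℕ) (hHD : HighwayDimLE G len d c k)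
    (H : Set V) (hH : IsMinimalSPC G len d c r H)
    (hsparse : LocallySparse d c r s H)
    (v : V) :
    ({h : V | h ∈ H ∧ ∃ u ∈ cball d v (c * r / 2), d h u ≤ c * r / 2}).ncard
      ≤ 3 * s * k := by
  classical
  have hc0 : (0 : ℝ) < c := by linarith
  have htA0 : (0 : ℝ) < r + r / c := by positivity
  have htC0 : (0 : ℝ) < r / 2 + r / c := by positivity
  have hcA : c * (r + r / c) = c * r + r := by field_simp
  have hcC : c * (r / 2 + r / c) = c * r / 2 + r := by field_simp
  have hrR : r ≤ c * r / 2 := by nlinarith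
  obtain ⟨XA, -, hXAcard, hXAhit⟩ := hHD (r + r / c) htA0 v
  obtain ⟨XB, -, hXBcard, hXBhit⟩ := hHD r hr v
  obtain ⟨XC, -, hXCcard, hXChit⟩ := hHD (r / 2 + r / c) htC0 v
  set X : Set V := XA ∪ XB ∪ XC with hX
  -- main claim: every h in the target set is within c*r/2 of some x in X
  have key : {h : V | h ∈ H ∧ ∃ u ∈ cball d v (c * r / 2), d h u ≤ c * r / 2} ⊆
      ⋃ x ∈ X, (H ∩ cball d x (c * r / 2)) := by
    rintro h ⟨hhH, u, huv, hhu⟩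
    have huv' : d u v ≤ c * r / 2 := huv
    have hD : d h v ≤ d h u + d u v := d_triangle hmetric h u v
    -- the witness path
    obtain ⟨a, b, w, hsp, hlr, hlR, hhsupp⟩ := witness_of_minimal hH hhH
    have conclude : ∀ x : V, x ∈ X → d h x ≤ c * r / 2 →
        h ∈ ⋃ x ∈ X, (H ∩ cball d x (c * r / 2)) := by
      intro x hxX hhx
      exact Set.mem_biUnion hxX ⟨hhH, hhx⟩
    by_cases hq1 : r < d h u
    · -- Case 1: use the shortest h–u path and scale r
      obtain ⟨w', hsp'⟩ := hmetric.2 h u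
      have hw'q : wlen len w' = d h u := hsp'.2
      have hball : ∀ x ∈ w'.support, x ∈ cball d v (c * r) := by
        intro x hx
        have h1 : d x u ≤ wlen len w' :=
          dist_support_le hmetric hlen_pos hlen_symm w' hx (Walk.end_mem_support w')
        have h2 : d x v ≤ d x u + d u v := d_triangle hmetric x u v
        show d x v ≤ c * r
        rw [hw'q] at h1
        linarith
      obtain ⟨x, hxB, hxsupp⟩ := hXBhit h u w' hsp' hball (by rw [hw'q]; exact hq1)
      have hhx : d h x ≤ c * r / 2 := by
        have h3 := dist_support_le hmetric hlen_pos hlen_symm w' (Walk.start_mem_support w') hxsupp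
        rw [hw'q] at h3
        linarith
      exact conclude x (by simp [hX, hxB]) hhx
    · push_neg at hq1
      by_cases hl1 : r + r / c < wlen len w
      · -- Case 2: use the witness and scale r + r/c
        have hball : ∀ x ∈ w.support, x ∈ cball d v (c * (r + r / c)) := by
          intro x hx
          have h1 : d x h ≤ wlen len w :=
            dist_support_le hmetric hlen_pos hlen_symm w hx hhsupp
          have h2 : d x v ≤ d x h + d h v := d_triangle hmetric x h v
          show d x v ≤ c * (r + r / c)
          rw [hcA]
          linarith
        obtain ⟨x, hxA, hxsupp⟩ := hXAhit a b w hsp hball hl1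
        have hhx : d h x ≤ c * r / 2 :=
          le_trans (dist_support_le hmetric hlen_pos hlen_symm w hhsupp hxsupp) hlR
        exact conclude x (by simp [hX, hxA]) hhx
      · push_neg at hl1
        by_cases hD1 : d h v + wlen len w ≤ c * r
        · -- Case 3: use the witness and scale r
          have hball : ∀ x ∈ w.support, x ∈ cball d v (c * r) := by
            intro x hx
            have h1 : d x h ≤ wlen len w :=
              dist_support_le hmetric hlen_pos hlen_symm w hx hhsupp
            have h2 : d x v ≤ d x h + d h v := d_triangle hmetric x h v
            show d x v ≤ c * r
            linarith
          obtain ⟨x, hxB, hxsupp⟩ := hXBhit a b w hsp hball hlr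
          have hhx : d h x ≤ c * r / 2 :=
            le_trans (dist_support_le hmetric hlen_pos hlen_symm w hhsupp hxsupp) hlR
          exact conclude x (by simp [hX, hxB]) hhx
        · -- Case 4: use the shortest h–u path and scale r/2 + r/c
          push_neg at hD1
          have hqC : r / 2 + r / c < d h u := by
            -- d h u ≥ d h v - c*r/2 > (c*r - ℓ) - c*r/2 ≥ c*r/2 - (r + r/c)
            have k1 : c * r - wlen len w - c * r / 2 < d h u := by linarith
            have k5 : c * (r / 2 + r / c) ≤ c * (c * r - wlen len w - c * r / 2) := by
              rw [hcC]
              have k3 : c * wlen len w ≤ c * (r + r / c) :=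
                mul_le_mul_of_nonneg_left hl1 hc0.le
              rw [hcA] at k3
              have k4 : (0 : ℝ) ≤ (c - 4) * (c + 1) * r :=
                mul_nonneg (mul_nonneg (by linarith) (by linarith)) hr.le
              nlinarith
            have k6 : r / 2 + r / c ≤ c * r - wlen len w - c * r / 2 :=
              le_of_mul_le_mul_left k5 hc0
            linarith
          obtain ⟨w', hsp'⟩ := hmetric.2 h u
          have hw'q : wlen len w' = d h u := hsp'.2
          have hball : ∀ x ∈ w'.support, x ∈ cball d v (c * (r / 2 + r / c)) := by
            intro x hx
            have h1 : d x u ≤ wlen len w' :=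
              dist_support_le hmetric hlen_pos hlen_symm w' hx (Walk.end_mem_support w')
            have h2 : d x v ≤ d x u + d u v := d_triangle hmetric x u v
            show d x v ≤ c * (r / 2 + r / c)
            rw [hcC]
            rw [hw'q] at h1
            linarith
          obtain ⟨x, hxC, hxsupp⟩ := hXChit h u w' hsp' hball (by rw [hw'q]; exact hqC)
          have hhx : d h x ≤ c * r / 2 := by
            have h3 := dist_support_le hmetric hlen_pos hlen_symm w' (Walk.start_mem_support w') hxsupp
            rw [hw'q] at h3
            linarith
          exact conclude x (by simp [hX, hxC]) hhx
  -- counting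
  have hXfin : X.Finite := Set.toFinite X
  have hcount := Set.ncard_le_ncard key (Set.toFinite _)
  have hunion : (⋃ x ∈ X, (H ∩ cball d x (c * r / 2))).ncard ≤ X.ncard * s := by
    have heq : (⋃ x ∈ X, (H ∩ cball d x (c * r / 2))) =
        ⋃ x ∈ hXfin.toFinset, (H ∩ cball d x (c * r / 2)) := by
      ext y
      simp only [Set.mem_iUnion, Set.Finite.mem_toFinset, exists_prop]
    rw [heq]
    calc (⋃ x ∈ hXfin.toFinset, (H ∩ cball d x (c * r / 2))).ncard
        ≤ ∑ x ∈ hXfin.toFinset, (H ∩ cball d x (c * r / 2)).ncard :=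
          ncard_biUnion_le_sum _ _
      _ ≤ hXfin.toFinset.card * s := by
          rw [← smul_eq_mul]
          exact Finset.sum_le_card_nsmul _ _ s (fun x _ => hsparse x)
      _ = X.ncard * s := by rw [Set.ncard_eq_toFinset_card X hXfin]
  have hXcard : X.ncard ≤ 3 * k := by
    calc X.ncard ≤ (XA ∪ XB).ncard + XC.ncard := Set.ncard_union_le _ _
      _ ≤ XA.ncard + XB.ncard + XC.ncard := by
          have := Set.ncard_union_le XA XB
          omega
      _ ≤ 3 * k := by omega
  calc ({h : V | h ∈ H ∧ ∃ u ∈ cball d v (c * r / 2), d h u ≤ c * r / 2}).ncard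
      ≤ X.ncard * s := le_trans hcount hunion
    _ ≤ 3 * k * s := Nat.mul_le_mul_right s hXcard
    _ = 3 * s * k := by ring
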